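/- arXiv:2107.11421 — 3 statements merged into one kernel-verified Lean document; each statement's English description precedes it below -/
import Mathlib

section
/- Let S and Q be VPAs over a common alphabet A with n and m states respectively. Then there exists a non-blocking VPA P over A with at most (n+1)(m+1) states such that L(P) = L(S) ∪ L(Q); moreover, if S and Q are deterministic, then P is deterministic and has no ε-transitions. In particular, visibly pushdown languages are closed under union. -/
inductive VPKind : Type where
  | call : VPKind
  | ret : VPKind
  | intern : VPKind

/-- A visibly pushdown automaton over an alphabet `A` partitioned by `kind` into
call (push), return (pop) and simple (internal) symbols.  The stack bottom `⊥` is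
implicit: a stack is a `List Stack`, the empty list meaning the stack contains only `⊥`.
`intT` transitions labelled by `none` are ε-transitions. -/
structure VPA (A : Type) (kind : A → VPKind) where
  State : Type
  Stack : Type
  fintypeState : Fintype State
  init : Set State
  final : Set State
  pushT : Set (State × A × Stack × State)
  popT : Set (State × A × Option Stack × State)
  intT : Set (State × Option A × State)
  push_call : ∀ p a Z q, (p, a, Z, q) ∈ pushT → kind a = VPKind.call
  pop_ret : ∀ p a Z q, (p, a, Z, q) ∈ popT → kind a = VPKind.ret
  int_simple : ∀ p a q, (p, some a, q) ∈ intT → kind a = VPKind.intern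

attribute [instance] VPA.fintypeState

namespace VPA

variable {A : Type} {kind : A → VPKind}

abbrev Conf (M : VPA A kind) : Type := M.State × List A × List M.Stack

inductive Step (M : VPA A kind) : M.Conf → M.Conf → Prop where
  | push {p q : M.State} {a : A} {Z : M.Stack} {σ : List A} {α : List M.Stack} :
      (p, a, Z, q) ∈ M.pushT → Step M (p, a :: σ, α) (q, σ, Z :: α)
  | pop {p q : M.State} {a : A} {Z : M.Stack} {σ : List A} {α : List M.Stack} :
      (p, a, some Z, q) ∈ M.popT → Step M (p, a :: σ, Z :: α) (q, σ, α)
  | popEmpty {p q : M.State} {a : A} {σ : List A} :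
      (p, a, none, q) ∈ M.popT → Step M (p, a :: σ, []) (q, σ, [])
  | int {p q : M.State} {a : A} {σ : List A} {α : List M.Stack} :
      (p, some a, q) ∈ M.intT → Step M (p, a :: σ, α) (q, σ, α)
  | eps {p q : M.State} {σ : List A} {α : List M.Stack} :
      (p, none, q) ∈ M.intT → Step M (p, σ, α) (q, σ, α)

/-- Reflexive-transitive closure `↦*` of the one-step move relation. -/
def Steps (M : VPA A kind) : M.Conf → M.Conf → Prop := Relation.ReflTransGen M.Step

/-- `n`-th power `↦ⁿ` of the one-step move relation. -/
def StepN (M : VPA A kind) : ℕ → M.Conf → M.Conf → Prop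
  | 0 => fun c c' => c = c'
  | n + 1 => fun c c' => ∃ d, M.Step c d ∧ StepN M n d c'

def Lang (M : VPA A kind) : Set (List A) :=
  { σ | ∃ s₀ ∈ M.init, ∃ p ∈ M.final, ∃ β, M.Steps (s₀, σ, []) (p, [], β) }

def NoEps (M : VPA A kind) : Prop := ∀ p q, (p, none, q) ∉ M.intT

def Deterministic (M : VPA A kind) : Prop :=
  M.init.Subsingleton ∧
  (∀ p a Z₁ q₁ Z₂ q₂, (p, a, Z₁, q₁) ∈ M.pushT → (p, a, Z₂, q₂) ∈ M.pushT →
      Z₁ = Z₂ ∧ q₁ = q₂) ∧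
  (∀ p a Z q₁ q₂, (p, a, Z, q₁) ∈ M.popT → (p, a, Z, q₂) ∈ M.popT → q₁ = q₂) ∧
  (∀ p a q₁ q₂, (p, a, q₁) ∈ M.intT → (p, a, q₂) ∈ M.intT → q₁ = q₂) ∧
  (∀ p q',
    ((∃ a Z q, (p, a, Z, q) ∈ M.pushT) ∨ (∃ a Z q, (p, a, Z, q) ∈ M.popT) ∨
      (∃ a q, (p, some a, q) ∈ M.intT)) → (p, none, q') ∉ M.intT)

def NonBlocking (M : VPA A kind) : Prop :=
  ∀ (s : M.State) (σ : List A) (α : List M.Stack), ∃ p β, M.Steps (s, σ, α) (p, [], β)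

/-- The synchronous product of two VPAs over a common alphabet. -/
def prod (M N : VPA A kind) : VPA A kind where
  State := M.State × N.State
  Stack := M.Stack × N.Stack
  fintypeState := inferInstance
  init := M.init ×ˢ N.init
  final := M.final ×ˢ N.final
  pushT := { t | (t.1.1, t.2.1, t.2.2.1.1, t.2.2.2.1) ∈ M.pushT ∧
                 (t.1.2, t.2.1, t.2.2.1.2, t.2.2.2.2) ∈ N.pushT }
  popT := { t |
      match t.2.2.1 with
      | some Z => (t.1.1, t.2.1, some Z.1, t.2.2.2.1) ∈ M.popT ∧
                  (t.1.2, t.2.1, some Z.2, t.2.2.2.2) ∈ N.popT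
      | none => (t.1.1, t.2.1, (none : Option M.Stack), t.2.2.2.1) ∈ M.popT ∧
                (t.1.2, t.2.1, (none : Option N.Stack), t.2.2.2.2) ∈ N.popT }
  intT := { t |
      match t.2.1 with
      | some a => (t.1.1, some a, t.2.2.1) ∈ M.intT ∧ (t.1.2, some a, t.2.2.2) ∈ N.intT
      | none => (t.1.1 = t.2.2.1 ∧ (t.1.2, none, t.2.2.2) ∈ N.intT) ∨
                (t.1.2 = t.2.2.2 ∧ (t.1.1, none, t.2.2.1) ∈ M.intT) }
  push_call := fun _ _ _ _ h => M.push_call _ _ _ _ h.1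
  pop_ret := by
    intro p a Z q h
    cases Z with
    | some Z => exact M.pop_ret _ _ _ _ h.1
    | none => exact M.pop_ret _ _ _ _ h.1
  int_simple := fun _ _ _ h => M.int_simple _ _ _ h.1

end VPA

/-- A visibly pushdown transition system over an alphabet `L` partitioned by `kind`.
`intT` transitions labelled by `none` are silent `ς`-transitions. -/
structure VPTS (L : Type) (kind : L → VPKind) where
  State : Type
  Stack : Type
  fintypeState : Fintype State
  init : Set State
  pushT : Set (State × L × Stack × State)
  popT : Set (State × L × Option Stack × State)
  intT : Set (State × Option L × State)
  push_call : ∀ p a Z q, (p, a, Z, q) ∈ pushT → kind a = VPKind.call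
  pop_ret : ∀ p a Z q, (p, a, Z, q) ∈ popT → kind a = VPKind.ret
  int_simple : ∀ p a q, (p, some a, q) ∈ intT → kind a = VPKind.intern

attribute [instance] VPTS.fintypeState

namespace VPTS

variable {L : Type} {kind : L → VPKind}

abbrev Conf (M : VPTS L kind) : Type := M.State × List M.Stack

/-- `M.Obs c σ c'` means `c ⇒^σ c'`: there is a sequence of one-step moves from `c`
to `c'` whose sequence of non-silent labels is `σ`. -/
inductive Obs (M : VPTS L kind) : M.Conf → List L → M.Conf → Prop where
  | refl (c : M.Conf) : Obs M c [] c
  | push {p q : M.State} {a : L} {Z : M.Stack} {α : List M.Stack} {σ : List L} {c : M.Conf} :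
      (p, a, Z, q) ∈ M.pushT → Obs M (q, Z :: α) σ c → Obs M (p, α) (a :: σ) c
  | pop {p q : M.State} {a : L} {Z : M.Stack} {α : List M.Stack} {σ : List L} {c : M.Conf} :
      (p, a, some Z, q) ∈ M.popT → Obs M (q, α) σ c → Obs M (p, Z :: α) (a :: σ) c
  | popEmpty {p q : M.State} {a : L} {σ : List L} {c : M.Conf} :
      (p, a, none, q) ∈ M.popT → Obs M (q, []) σ c → Obs M (p, []) (a :: σ) c
  | int {p q : M.State} {a : L} {α : List M.Stack} {σ : List L} {c : M.Conf} :
      (p, some a, q) ∈ M.intT → Obs M (q, α) σ c → Obs M (p, α) (a :: σ) c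
  | silent {p q : M.State} {α : List M.Stack} {σ : List L} {c : M.Conf} :
      (p, none, q) ∈ M.intT → Obs M (q, α) σ c → Obs M (p, α) σ c

/-- The observable traces of `M`. -/
def otr (M : VPTS L kind) : Set (List L) :=
  { σ | ∃ s₀ ∈ M.init, ∃ c, M.Obs (s₀, []) σ c }

/-- `I` (D,F)-visibly conforms to `S`. -/
def VConf (I S : VPTS L kind) (D F : Set (List L)) : Prop :=
  (∀ σ ∈ I.otr ∩ F, σ ∉ S.otr) ∧ (∀ σ ∈ I.otr ∩ D, σ ∈ S.otr)

def after (M : VPTS L kind) (c : M.Conf) (σ : List L) : Set M.Conf :=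
  { c' | M.Obs c σ c' }

/-- The output symbols (members of `LU`) enabled at some configuration of `C`. -/
def outSet (M : VPTS L kind) (LU : Set L) (C : Set M.Conf) : Set L :=
  { ℓ | ℓ ∈ LU ∧ ∃ c ∈ C, ∃ c', M.Obs c [ℓ] c' }

/-- `I` ioco-like conforms to `S`, with output alphabet `LU`. -/
def Ioco (LU : Set L) (I S : VPTS L kind) : Prop :=
  ∀ σ ∈ S.otr, ∀ q₀ ∈ I.init, ∀ ℓ ∈ I.outSet LU (I.after (q₀, []) σ),
    ∃ s₀ ∈ S.init, ℓ ∈ S.outSet LU (S.after (s₀, []) σ)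

/-- A VPTS is deterministic: at most one initial state and each observable trace
reaches a unique configuration. -/
def Deterministic (M : VPTS L kind) : Prop :=
  M.init.Subsingleton ∧
  ∀ (σ : List L), ∀ s₀ ∈ M.init, ∀ s₀' ∈ M.init, ∀ c c',
    M.Obs (s₀, []) σ c → M.Obs (s₀', []) σ c' → c = c'

/-- The cross product of two VPTSs over a common alphabet: observable moves
synchronize, silent moves interleave. -/
def prod (M N : VPTS L kind) : VPTS L kind where
  State := M.State × N.State
  Stack := M.Stack × N.Stack
  fintypeState := inferInstance
  init := M.init ×ˢ N.init
  pushT := { t | (t.1.1, t.2.1, t.2.2.1.1, t.2.2.2.1) ∈ M.pushT ∧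
                 (t.1.2, t.2.1, t.2.2.1.2, t.2.2.2.2) ∈ N.pushT }
  popT := { t |
      match t.2.2.1 with
      | some Z => (t.1.1, t.2.1, some Z.1, t.2.2.2.1) ∈ M.popT ∧
                  (t.1.2, t.2.1, some Z.2, t.2.2.2.2) ∈ N.popT
      | none => (t.1.1, t.2.1, (none : Option M.Stack), t.2.2.2.1) ∈ M.popT ∧
                (t.1.2, t.2.1, (none : Option N.Stack), t.2.2.2.2) ∈ N.popT }
  intT := { t |
      match t.2.1 with
      | some a => (t.1.1, some a, t.2.2.1) ∈ M.intT ∧ (t.1.2, some a, t.2.2.2) ∈ N.intT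
      | none => (t.1.1 = t.2.2.1 ∧ (t.1.2, none, t.2.2.2) ∈ N.intT) ∨
                (t.1.2 = t.2.2.2 ∧ (t.1.1, none, t.2.2.1) ∈ M.intT) }
  push_call := fun _ _ _ _ h => M.push_call _ _ _ _ h.1
  pop_ret := by
    intro p a Z q h
    cases Z with
    | some Z => exact M.pop_ret _ _ _ _ h.1
    | none => exact M.pop_ret _ _ _ _ h.1
  int_simple := fun _ _ _ h => M.int_simple _ _ _ h.1

/-- `I` passes the fault model `(T, fail)`: no run of the cross product reaches
the `fail` state of `T`. -/
def Passes (T : VPTS L kind) (fail : T.State) (I : VPTS L kind) : Prop :=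
  ∀ (σ : List L), ∀ t₀ ∈ T.init, ∀ q₀ ∈ I.init, ∀ (q : I.State)
    (α : List (T.Stack × I.Stack)),
    ¬ (T.prod I).Obs ((t₀, q₀), []) σ ((fail, q), α)

/-- `Q` adheres to the test suite `T`. -/
def Adheres (Q : VPTS L kind) (T : Set (List L)) : Prop := Q.otr ∩ T = ∅

/-- `T` is a complete (sound and exhaustive) test suite for `S` and `(D,F)`. -/
def CompleteSuite (S : VPTS L kind) (D F : Set (List L)) (T : Set (List L)) : Prop :=
  ∀ I : VPTS L kind, (Adheres I T ↔ VConf I S D F)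

/-- The concatenation `otr(S)·LU`. -/
def otrConcat (S : VPTS L kind) (LU : Set L) : Set (List L) :=
  { w | ∃ σ ∈ S.otr, ∃ ℓ ∈ LU, w = σ ++ [ℓ] }

end VPTS

/-! Make each automaton ε-free by letting a state `p` perform every letter move of every state
ε-reachable from `p`, and accept in `p` when a final state is ε-reachable. In a deterministic
VPA there is at most one state with letter moves that is ε-reachable from `p`, so determinism
survives. Then complete it with a single rejecting sink state, which also provides a dummy stack
symbol for calls read there. Two complete ε-free VPAs can be run in lockstep, since the letter
alone dictates the stack action; accepting when either component accepts gives the union, and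
completeness ensures the rejecting component never blocks the accepting one. -/

namespace VPA

variable {A : Type} {kind : A → VPKind}

section Steps

variable {M : VPA A kind}

def Complete (M : VPA A kind) : Prop :=
  ∀ (s : M.State) (a : A) (σ : List A) (α : List M.Stack), ∃ t β, M.Step (s, a :: σ, α) (t, σ, β)

theorem Complete.nonBlocking (h : M.Complete) : M.NonBlocking := by
  intro s σ α
  induction σ generalizing s α with
  | nil => exact ⟨s, α, .refl⟩
  | cons a σ ih =>
    obtain ⟨t, β, hstep⟩ := h s a σ α
    obtain ⟨p, γ, hrun⟩ := ih t β
    exact ⟨p, γ, .head hstep hrun⟩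

variable {p q : M.State} {a : A} {σ : List A} {α β : List M.Stack}

theorem Step.inv_call (hk : kind a = .call) (h : M.Step (p, a :: σ, α) (q, σ, β)) :
    ∃ Z, (p, a, Z, q) ∈ M.pushT ∧ β = Z :: α := by
  cases h with
  | push h => exact ⟨_, h, rfl⟩
  | pop h | popEmpty h => cases hk.symm.trans (M.pop_ret _ _ _ _ h)
  | int h => cases hk.symm.trans (M.int_simple _ _ _ h)

theorem Step.inv_ret_nil (hk : kind a = .ret) (h : M.Step (p, a :: σ, []) (q, σ, β)) :
    (p, a, none, q) ∈ M.popT ∧ β = [] := by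
  cases h with
  | push h => cases hk.symm.trans (M.push_call _ _ _ _ h)
  | popEmpty h => exact ⟨h, rfl⟩
  | int h => cases hk.symm.trans (M.int_simple _ _ _ h)

theorem Step.inv_ret_cons {Z : M.Stack} (hk : kind a = .ret)
    (h : M.Step (p, a :: σ, Z :: α) (q, σ, β)) : (p, a, some Z, q) ∈ M.popT ∧ β = α := by
  cases h with
  | push h => cases hk.symm.trans (M.push_call _ _ _ _ h)
  | pop h => exact ⟨h, rfl⟩
  | int h => cases hk.symm.trans (M.int_simple _ _ _ h)

theorem Step.inv_intern (hk : kind a = .intern) (h : M.Step (p, a :: σ, α) (q, σ, β)) :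
    (p, some a, q) ∈ M.intT ∧ β = α := by
  cases h with
  | push h => cases hk.symm.trans (M.push_call _ _ _ _ h)
  | pop h | popEmpty h => cases hk.symm.trans (M.pop_ret _ _ _ _ h)
  | int h => exact ⟨h, rfl⟩

theorem NoEps.steps_nil (hM : M.NoEps) (h : M.Steps (p, [], α) (q, [], β)) : p = q := by
  rcases h.cases_head with h | ⟨_, h, -⟩
  · exact congrArg Prod.fst h
  · cases h with
    | eps h => exact absurd h (hM _ _)

theorem NoEps.steps_cons (hM : M.NoEps) (h : M.Steps (p, a :: σ, α) (q, [], β)) :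
    ∃ t γ, M.Step (p, a :: σ, α) (t, σ, γ) ∧ M.Steps (t, σ, γ) (q, [], β) := by
  rcases h.cases_head with h | ⟨_, hstep, hrun⟩
  · cases h
  · cases hstep with
    | push m => exact ⟨_, _, .push m, hrun⟩
    | pop m => exact ⟨_, _, .pop m, hrun⟩
    | popEmpty m => exact ⟨_, _, .popEmpty m, hrun⟩
    | int m => exact ⟨_, _, .int m, hrun⟩
    | eps m => exact absurd m (hM _ _)

end Steps

section EpsElim

variable {M : VPA A kind}

def EpsReach (M : VPA A kind) : M.State → M.State → Prop :=
  Relation.ReflTransGen fun p q => (p, none, q) ∈ M.intT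

theorem EpsReach.steps {p q : M.State} (h : M.EpsReach p q) (σ : List A) (α : List M.Stack) :
    M.Steps (p, σ, α) (q, σ, α) :=
  h.lift (fun p => (p, σ, α)) fun _ _ => Step.eps

def HasLetterMove (M : VPA A kind) (p : M.State) : Prop :=
  (∃ a Z q, (p, a, Z, q) ∈ M.pushT) ∨ (∃ a Z q, (p, a, Z, q) ∈ M.popT) ∨
    (∃ a q, (p, some a, q) ∈ M.intT)

theorem Deterministic.eq_of_epsReach (hd : M.Deterministic) {p q₁ q₂ : M.State}
    (h₁ : M.EpsReach p q₁) (h₂ : M.EpsReach p q₂)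
    (m₁ : M.HasLetterMove q₁) (m₂ : M.HasLetterMove q₂) : q₁ = q₂ := by
  have stuck {q r : M.State} (m : M.HasLetterMove q) (h : M.EpsReach q r) : q = r := by
    rcases h.cases_head with rfl | ⟨x, hx, -⟩
    · rfl
    · exact absurd hx (hd.2.2.2.2 q x m)
  rcases Relation.ReflTransGen.total_of_right_unique
    (fun x _ _ => hd.2.2.2.1 x none _ _) h₁ h₂ with h | h
  · exact stuck m₁ h
  · exact (stuck m₂ h).symm

def epsElim (M : VPA A kind) : VPA A kind where
  State := M.State
  Stack := M.Stack
  fintypeState := M.fintypeState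
  init := M.init
  final := {p | ∃ f ∈ M.final, M.EpsReach p f}
  pushT := {t | ∃ p, M.EpsReach t.1 p ∧ (p, t.2) ∈ M.pushT}
  popT := {t | ∃ p, M.EpsReach t.1 p ∧ (p, t.2) ∈ M.popT}
  intT := {t | t.2.1 ≠ none ∧ ∃ p, M.EpsReach t.1 p ∧ (p, t.2) ∈ M.intT}
  push_call _ _ _ _ := fun ⟨_, _, h⟩ => M.push_call _ _ _ _ h
  pop_ret _ _ _ _ := fun ⟨_, _, h⟩ => M.pop_ret _ _ _ _ h
  int_simple _ _ _ := fun ⟨_, _, _, h⟩ => M.int_simple _ _ _ h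

theorem epsElim_noEps : M.epsElim.NoEps := fun _ _ h => h.1 rfl

theorem steps_of_epsElim_steps {c d : M.Conf} (h : M.epsElim.Steps c d) : M.Steps c d := by
  refine Relation.reflTransGen_closed (r := M.epsElim.Step) (fun c d hcd => ?_) _ _ h
  cases hcd with
  | push m => obtain ⟨_, hp, m⟩ := m; exact (hp.steps _ _).tail (.push m)
  | pop m => obtain ⟨_, hp, m⟩ := m; exact (hp.steps _ _).tail (.pop m)
  | popEmpty m => obtain ⟨_, hp, m⟩ := m; exact (hp.steps _ _).tail (.popEmpty m)
  | int m => obtain ⟨-, _, hp, m⟩ := m; exact (hp.steps _ _).tail (.int m)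
  | eps m => exact absurd rfl m.1

theorem epsElim_steps_of_steps {c : M.Conf} {q : M.State} {τ : List A} {β : List M.Stack}
    (h : M.Steps c (q, τ, β)) {p₀ : M.State} (hp₀ : M.EpsReach p₀ c.1) :
    ∃ r, M.EpsReach r q ∧ M.epsElim.Steps (p₀, c.2) (r, τ, β) := by
  induction h using Relation.ReflTransGen.head_induction_on generalizing p₀ with
  | refl => exact ⟨p₀, hp₀, .refl⟩
  | head hstep _ ih =>
    obtain ⟨r, hr, hrun⟩ := ih .refl
    cases hstep with
    | push m => exact ⟨r, hr, .head (.push ⟨_, hp₀, m⟩) hrun⟩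
    | pop m => exact ⟨r, hr, .head (.pop ⟨_, hp₀, m⟩) hrun⟩
    | popEmpty m => exact ⟨r, hr, .head (.popEmpty ⟨_, hp₀, m⟩) hrun⟩
    | int m => exact ⟨r, hr, .head (.int ⟨nofun, _, hp₀, m⟩) hrun⟩
    | eps m => exact ih (hp₀.tail m)

theorem epsElim_lang : M.epsElim.Lang = M.Lang := by
  ext σ
  constructor
  · rintro ⟨s₀, hs₀, p, ⟨f, hf, hpf⟩, β, hrun⟩
    exact ⟨s₀, hs₀, f, hf, β, (steps_of_epsElim_steps hrun).trans (hpf.steps _ _)⟩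
  · rintro ⟨s₀, hs₀, f, hf, β, hrun⟩
    obtain ⟨r, hr, hrun⟩ := epsElim_steps_of_steps hrun (p₀ := s₀) .refl
    exact ⟨s₀, hs₀, r, ⟨f, hf, hr⟩, β, hrun⟩

theorem Deterministic.epsElim (hd : M.Deterministic) : M.epsElim.Deterministic := by
  refine ⟨hd.1, ?_, ?_, ?_, fun p q _ => epsElim_noEps p q⟩
  · rintro p a Z₁ q₁ Z₂ q₂ ⟨p₁, hp₁, m₁⟩ ⟨p₂, hp₂, m₂⟩
    obtain rfl := hd.eq_of_epsReach hp₁ hp₂ (.inl ⟨_, _, _, m₁⟩) (.inl ⟨_, _, _, m₂⟩)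
    exact hd.2.1 _ _ _ _ _ _ m₁ m₂
  · rintro p a Z q₁ q₂ ⟨p₁, hp₁, m₁⟩ ⟨p₂, hp₂, m₂⟩
    obtain rfl := hd.eq_of_epsReach hp₁ hp₂ (.inr (.inl ⟨_, _, _, m₁⟩)) (.inr (.inl ⟨_, _, _, m₂⟩))
    exact hd.2.2.1 _ _ _ _ _ m₁ m₂
  · rintro p x q₁ q₂ ⟨hx, p₁, hp₁, m₁⟩ ⟨-, p₂, hp₂, m₂⟩
    obtain ⟨a, rfl⟩ := Option.ne_none_iff_exists'.mp hx
    obtain rfl := hd.eq_of_epsReach hp₁ hp₂ (.inr (.inr ⟨_, _, m₁⟩)) (.inr (.inr ⟨_, _, m₂⟩))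
    exact hd.2.2.2.1 _ _ _ _ m₁ m₂

end EpsElim

section Completion

/- In the completion, `none` is a rejecting sink state and also the dummy stack symbol pushed by
calls read in the sink or where `M` has no push move. -/

inductive PushWithSink (M : VPA A kind) :
    Option M.State → A → Option M.Stack → Option M.State → Prop
  | lift {p a Z q} : (p, a, Z, q) ∈ M.pushT → PushWithSink M (some p) a (some Z) (some q)
  | sink {s a} : kind a = .call → (∀ p ∈ s, ∀ Z q, (p, a, Z, q) ∉ M.pushT) →
      PushWithSink M s a none none

inductive PopWithSink (M : VPA A kind) :
    Option M.State → A → Option (Option M.Stack) → Option M.State → Prop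
  | lift {p a Z q Y} : (p, a, Z, q) ∈ M.popT → Y = Z.map some → PopWithSink M (some p) a Y (some q)
  | sink {s a Y} : kind a = .ret → (∀ p ∈ s, ∀ Z q, Y = Z.map some → (p, a, Z, q) ∉ M.popT) →
      PopWithSink M s a Y none

inductive IntWithSink (M : VPA A kind) : Option M.State → Option A → Option M.State → Prop
  | lift {p a q} : (p, some a, q) ∈ M.intT → IntWithSink M (some p) (some a) (some q)
  | sink {s a} : kind a = .intern → (∀ p ∈ s, ∀ q, (p, some a, q) ∉ M.intT) →
      IntWithSink M s (some a) none

variable {M : VPA A kind}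

theorem PushWithSink.exists {a : A} (hk : kind a = .call) (s : Option M.State) :
    ∃ Z q, M.PushWithSink s a Z q := by
  by_cases h : ∃ p ∈ s, ∃ Z q, (p, a, Z, q) ∈ M.pushT
  · obtain ⟨p, rfl, Z, q, h⟩ := h
    exact ⟨_, _, .lift h⟩
  · push Not at h
    exact ⟨_, _, .sink hk h⟩

theorem PopWithSink.exists {a : A} (hk : kind a = .ret) (s : Option M.State)
    (Y : Option (Option M.Stack)) : ∃ q, M.PopWithSink s a Y q := by
  by_cases h : ∃ p ∈ s, ∃ Z q, Y = Z.map some ∧ (p, a, Z, q) ∈ M.popT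
  · obtain ⟨p, rfl, Z, q, hY, h⟩ := h
    exact ⟨_, .lift h hY⟩
  · push Not at h
    exact ⟨_, .sink hk h⟩

theorem IntWithSink.exists {a : A} (hk : kind a = .intern) (s : Option M.State) :
    ∃ q, M.IntWithSink s (some a) q := by
  by_cases h : ∃ p ∈ s, ∃ q, (p, some a, q) ∈ M.intT
  · obtain ⟨p, rfl, q, h⟩ := h
    exact ⟨_, .lift h⟩
  · push Not at h
    exact ⟨_, .sink hk h⟩

open Classical in
def completion (M : VPA A kind) : VPA A kind where
  State := Option M.State
  Stack := Option M.Stack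
  fintypeState := inferInstance
  init := if M.init.Nonempty then some '' M.init else {none}
  final := some '' M.final
  pushT := {t | M.PushWithSink t.1 t.2.1 t.2.2.1 t.2.2.2}
  popT := {t | M.PopWithSink t.1 t.2.1 t.2.2.1 t.2.2.2}
  intT := {t | M.IntWithSink t.1 t.2.1 t.2.2}
  push_call := by
    rintro _ _ _ _ (⟨h⟩ | ⟨hk, -⟩)
    exacts [M.push_call _ _ _ _ h, hk]
  pop_ret := by
    rintro _ _ _ _ (⟨h, -⟩ | ⟨hk, -⟩)
    exacts [M.pop_ret _ _ _ _ h, hk]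
  int_simple := by
    rintro _ _ _ (⟨h⟩ | ⟨hk, -⟩)
    exacts [M.int_simple _ _ _ h, hk]

theorem completion_noEps : M.completion.NoEps := by
  rintro _ _ ⟨⟩

theorem completion_complete : M.completion.Complete := by
  intro s a σ α
  rcases hk : kind a with _ | _ | _
  · obtain ⟨Z, q, h⟩ := PushWithSink.exists hk s
    exact ⟨q, Z :: α, .push h⟩
  · cases α with
    | nil =>
      obtain ⟨q, h⟩ := PopWithSink.exists hk s none
      exact ⟨q, [], .popEmpty h⟩
    | cons Y α =>
      obtain ⟨q, h⟩ := PopWithSink.exists hk s (some Y)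
      exact ⟨q, α, .pop h⟩
  · obtain ⟨q, h⟩ := IntWithSink.exists hk s
    exact ⟨q, α, .int h⟩

open Classical in
theorem completion_init :
    M.completion.init = if M.init.Nonempty then some '' M.init else {none} := rfl

open Classical in
theorem mem_completion_init {p : M.State} : some p ∈ M.completion.init ↔ p ∈ M.init := by
  change some p ∈ (if M.init.Nonempty then some '' M.init else {none}) ↔ _
  split_ifs with h
  · simp
  · simpa using fun hp => h ⟨p, hp⟩

theorem completion_init_nonempty : M.completion.init.Nonempty := by
  rw [completion_init]
  split_ifs with h
  exacts [h.image some, Set.singleton_nonempty none]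

theorem completion_steps_of_steps (hM : M.NoEps) {c d : M.Conf} (h : M.Steps c d) :
    M.completion.Steps (some c.1, c.2.1, c.2.2.map some) (some d.1, d.2.1, d.2.2.map some) := by
  refine Relation.ReflTransGen.lift' (p := M.completion.Step)
    (fun c : M.Conf => ((some c.1, c.2.1, c.2.2.map some) : M.completion.Conf))
    (fun c d hcd => .single ?_) _ _ h
  cases hcd with
  | push m => exact .push (.lift m)
  | pop m => exact .pop (.lift m rfl)
  | popEmpty m => exact .popEmpty (.lift m rfl)
  | int m => exact .int (.lift m)
  | eps m => exact absurd m (hM _ _)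

theorem completion_step_sink {σ : List A} {γ : List M.completion.Stack} {d : M.completion.Conf}
    (h : M.completion.Step (none, σ, γ) d) : d.1 = none := by
  cases h <;> rename_i m <;> cases m <;> rfl

theorem completion_steps_sink {c d : M.completion.Conf} (h : M.completion.Steps c d)
    (hc : c.1 = none) : d.1 = none := by
  induction h with
  | refl => exact hc
  | @tail b d _ hstep ih =>
    obtain ⟨s, σ, γ⟩ := b
    obtain rfl : s = none := ih
    exact completion_step_sink hstep

theorem step_of_completion_step {p q : M.State} {σ τ : List A} {γ δ : List M.completion.Stack}
    (h : M.completion.Step (some p, σ, γ) (some q, τ, δ)) :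
    M.Step (p, σ, γ.reduceOption) (q, τ, δ.reduceOption) := by
  cases h with
  | push m => cases m with | lift m => exact .push m
  | pop m =>
    rcases m with @⟨_, _, _ | W, _, _, m, hY⟩
    · cases hY
    · cases hY
      exact .pop m
  | popEmpty m =>
    rcases m with @⟨_, _, _ | W, _, _, m, hY⟩
    · exact .popEmpty m
    · cases hY
  | int m => cases m with | lift m => exact .int m
  | eps m => cases m

theorem steps_of_completion_steps {c d : M.completion.Conf} (h : M.completion.Steps c d)
    {p q : M.State} (hc : c.1 = some p) (hd : d.1 = some q) :
    M.Steps (p, c.2.1, c.2.2.reduceOption) (q, d.2.1, d.2.2.reduceOption) := by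
  induction h using Relation.ReflTransGen.head_induction_on generalizing p with
  | refl =>
    obtain rfl := Option.some.inj (hc.symm.trans hd)
    exact .refl
  | @head c e hstep hrun ih =>
    obtain ⟨s, σ, γ⟩ := c
    obtain ⟨t, τ, δ⟩ := e
    obtain rfl : s = some p := hc
    cases t with
    | none => cases hd.symm.trans (completion_steps_sink hrun rfl)
    | some r => exact .head (step_of_completion_step hstep) (ih rfl)

theorem completion_lang (hM : M.NoEps) : M.completion.Lang = M.Lang := by
  ext σ
  constructor
  · rintro ⟨s₀, hs₀, _, ⟨f, hf, rfl⟩, β, hrun⟩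
    cases s₀ with
    | none => cases completion_steps_sink hrun rfl
    | some p =>
      exact ⟨p, mem_completion_init.mp hs₀, f, hf, _, steps_of_completion_steps hrun rfl rfl⟩
  · rintro ⟨s₀, hs₀, f, hf, β, hrun⟩
    exact ⟨some s₀, mem_completion_init.mpr hs₀, some f, ⟨f, hf, rfl⟩, _,
      completion_steps_of_steps hM hrun⟩

theorem Deterministic.completion (hd : M.Deterministic) : M.completion.Deterministic := by
  refine ⟨?_, ?_, ?_, ?_, fun p q _ => completion_noEps p q⟩
  · rw [completion_init]
    split_ifs
    exacts [hd.1.image some, Set.subsingleton_singleton]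
  · rintro s a Z₁ q₁ Z₂ q₂ (⟨m₁⟩ | ⟨-, hs₁⟩) (⟨m₂⟩ | ⟨-, hs₂⟩)
    · obtain ⟨rfl, rfl⟩ := hd.2.1 _ _ _ _ _ _ m₁ m₂
      exact ⟨rfl, rfl⟩
    · exact absurd m₁ (hs₂ _ rfl _ _)
    · exact absurd m₂ (hs₁ _ rfl _ _)
    · exact ⟨rfl, rfl⟩
  · rintro s a Y q₁ q₂ (⟨m₁, rfl⟩ | ⟨-, hs₁⟩) (⟨m₂, hY⟩ | ⟨-, hs₂⟩)
    · obtain rfl := Option.map_injective (Option.some_injective _) hY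
      rw [hd.2.2.1 _ _ _ _ _ m₁ m₂]
    · exact absurd m₁ (hs₂ _ rfl _ _ rfl)
    · exact absurd m₂ (hs₁ _ rfl _ _ hY)
    · rfl
  · rintro s x q₁ q₂ (⟨m₁⟩ | ⟨-, hs₁⟩) (⟨m₂⟩ | ⟨-, hs₂⟩)
    · rw [hd.2.2.2.1 _ _ _ _ m₁ m₂]
    · exact absurd m₁ (hs₂ _ rfl _)
    · exact absurd m₂ (hs₁ _ rfl _)
    · rfl

end Completion

section UnionProd

def unionProd (M N : VPA A kind) : VPA A kind :=
  { M.prod N with final := {s | s.1 ∈ M.final ∨ s.2 ∈ N.final} }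

variable {M N : VPA A kind}

theorem unionProd_noEps (hM : M.NoEps) (hN : N.NoEps) : (unionProd M N).NoEps := by
  rintro p q (⟨-, h⟩ | ⟨-, h⟩)
  exacts [hN _ _ h, hM _ _ h]

theorem unionProd_step_proj {c d : (unionProd M N).Conf} (h : (unionProd M N).Step c d) :
    M.Steps (c.1.1, c.2.1, c.2.2.map Prod.fst) (d.1.1, d.2.1, d.2.2.map Prod.fst) ∧
      N.Steps (c.1.2, c.2.1, c.2.2.map Prod.snd) (d.1.2, d.2.1, d.2.2.map Prod.snd) := by
  cases h with
  | push m => exact ⟨.single (.push m.1), .single (.push m.2)⟩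
  | pop m => exact ⟨.single (.pop m.1), .single (.pop m.2)⟩
  | popEmpty m => exact ⟨.single (.popEmpty m.1), .single (.popEmpty m.2)⟩
  | int m => exact ⟨.single (.int m.1), .single (.int m.2)⟩
  | eps m =>
    rcases m with ⟨h₁, m₂⟩ | ⟨h₂, m₁⟩
    · exact ⟨h₁ ▸ .refl, .single (.eps m₂)⟩
    · exact ⟨.single (.eps m₁), h₂ ▸ .refl⟩

theorem unionProd_steps_fst {c d : (unionProd M N).Conf} (h : (unionProd M N).Steps c d) :
    M.Steps (c.1.1, c.2.1, c.2.2.map Prod.fst) (d.1.1, d.2.1, d.2.2.map Prod.fst) :=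
  Relation.ReflTransGen.lift' (p := M.Step)
    (fun c : (unionProd M N).Conf => (c.1.1, c.2.1, c.2.2.map Prod.fst))
    (fun _ _ h => (unionProd_step_proj h).1) _ _ h

theorem unionProd_steps_snd {c d : (unionProd M N).Conf} (h : (unionProd M N).Steps c d) :
    N.Steps (c.1.2, c.2.1, c.2.2.map Prod.snd) (d.1.2, d.2.1, d.2.2.map Prod.snd) :=
  Relation.ReflTransGen.lift' (p := N.Step)
    (fun c : (unionProd M N).Conf => (c.1.2, c.2.1, c.2.2.map Prod.snd))
    (fun _ _ h => (unionProd_step_proj h).2) _ _ h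

theorem unionProd_step_of_step {p₁ t₁ : M.State} {p₂ t₂ : N.State} {a : A} {σ : List A}
    {γ : List (M.Stack × N.Stack)} {β₁ : List M.Stack} {β₂ : List N.Stack}
    (h₁ : M.Step (p₁, a :: σ, γ.map Prod.fst) (t₁, σ, β₁))
    (h₂ : N.Step (p₂, a :: σ, γ.map Prod.snd) (t₂, σ, β₂)) :
    ∃ δ, (unionProd M N).Step ((p₁, p₂), a :: σ, γ) ((t₁, t₂), σ, δ) ∧
      δ.map Prod.fst = β₁ ∧ δ.map Prod.snd = β₂ := by
  rcases hk : kind a with _ | _ | _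
  · obtain ⟨Z₁, m₁, rfl⟩ := h₁.inv_call hk
    obtain ⟨Z₂, m₂, rfl⟩ := h₂.inv_call hk
    exact ⟨(Z₁, Z₂) :: γ, .push (M := unionProd M N) ⟨m₁, m₂⟩, rfl, rfl⟩
  · cases γ with
    | nil =>
      obtain ⟨m₁, rfl⟩ := h₁.inv_ret_nil hk
      obtain ⟨m₂, rfl⟩ := h₂.inv_ret_nil hk
      exact ⟨[], .popEmpty ⟨m₁, m₂⟩, rfl, rfl⟩
    | cons Z γ =>
      obtain ⟨m₁, rfl⟩ := h₁.inv_ret_cons hk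
      obtain ⟨m₂, rfl⟩ := h₂.inv_ret_cons hk
      exact ⟨γ, .pop ⟨m₁, m₂⟩, rfl, rfl⟩
  · obtain ⟨m₁, rfl⟩ := h₁.inv_intern hk
    obtain ⟨m₂, rfl⟩ := h₂.inv_intern hk
    exact ⟨γ, .int ⟨m₁, m₂⟩, rfl, rfl⟩

theorem unionProd_steps_of_steps (hM : M.NoEps) (hN : N.NoEps) {σ : List A}
    {p₁ q₁ : M.State} {p₂ q₂ : N.State} {γ : List (M.Stack × N.Stack)}
    {β₁ : List M.Stack} {β₂ : List N.Stack}
    (h₁ : M.Steps (p₁, σ, γ.map Prod.fst) (q₁, [], β₁))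
    (h₂ : N.Steps (p₂, σ, γ.map Prod.snd) (q₂, [], β₂)) :
    ∃ δ, (unionProd M N).Steps ((p₁, p₂), σ, γ) ((q₁, q₂), [], δ) := by
  induction σ generalizing p₁ p₂ γ with
  | nil =>
    obtain rfl := hM.steps_nil h₁
    obtain rfl := hN.steps_nil h₂
    exact ⟨γ, .refl⟩
  | cons a σ ih =>
    obtain ⟨t₁, _, s₁, h₁⟩ := hM.steps_cons h₁
    obtain ⟨t₂, _, s₂, h₂⟩ := hN.steps_cons h₂
    obtain ⟨δ, s, rfl, rfl⟩ := unionProd_step_of_step s₁ s₂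
    obtain ⟨δ', hrun⟩ := ih h₁ h₂
    exact ⟨δ', .head s hrun⟩

theorem Complete.unionProd (hM : M.Complete) (hN : N.Complete) : (unionProd M N).Complete := by
  rintro ⟨s₁, s₂⟩ a σ γ
  obtain ⟨_, _, h₁⟩ := hM s₁ a σ (γ.map Prod.fst)
  obtain ⟨_, _, h₂⟩ := hN s₂ a σ (γ.map Prod.snd)
  obtain ⟨_, h, -⟩ := unionProd_step_of_step h₁ h₂
  exact ⟨_, _, h⟩

theorem unionProd_lang (hM : M.NoEps) (hN : N.NoEps) (hMb : M.NonBlocking) (hNb : N.NonBlocking)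
    (hMi : M.init.Nonempty) (hNi : N.init.Nonempty) :
    (unionProd M N).Lang = M.Lang ∪ N.Lang := by
  ext σ
  constructor
  · rintro ⟨⟨s₁, s₂⟩, ⟨hs₁, hs₂⟩, ⟨q₁, q₂⟩, hq | hq, β, hrun⟩
    · exact .inl ⟨s₁, hs₁, q₁, hq, _, unionProd_steps_fst hrun⟩
    · exact .inr ⟨s₂, hs₂, q₂, hq, _, unionProd_steps_snd hrun⟩
  · rintro (⟨s₁, hs₁, q₁, hq₁, β₁, h₁⟩ | ⟨s₂, hs₂, q₂, hq₂, β₂, h₂⟩)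
    · obtain ⟨s₂, hs₂⟩ := hNi
      obtain ⟨q₂, β₂, h₂⟩ := hNb s₂ σ []
      obtain ⟨δ, hrun⟩ := unionProd_steps_of_steps hM hN (γ := []) h₁ h₂
      exact ⟨(s₁, s₂), ⟨hs₁, hs₂⟩, (q₁, q₂), .inl hq₁, δ, hrun⟩
    · obtain ⟨s₁, hs₁⟩ := hMi
      obtain ⟨q₁, β₁, h₁⟩ := hMb s₁ σ []
      obtain ⟨δ, hrun⟩ := unionProd_steps_of_steps hM hN (γ := []) h₁ h₂
      exact ⟨(s₁, s₂), ⟨hs₁, hs₂⟩, (q₁, q₂), .inr hq₂, δ, hrun⟩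

theorem Deterministic.unionProd (hM : M.Deterministic) (hN : N.Deterministic)
    (hMe : M.NoEps) (hNe : N.NoEps) : (unionProd M N).Deterministic := by
  refine ⟨?_, ?_, ?_, ?_, fun p q _ => unionProd_noEps hMe hNe p q⟩
  · rintro ⟨_, _⟩ ⟨hx₁, hx₂⟩ ⟨_, _⟩ ⟨hy₁, hy₂⟩
    exact Prod.ext (hM.1 hx₁ hy₁) (hN.1 hx₂ hy₂)
  · rintro ⟨s₁, s₂⟩ a ⟨Z₁, Z₂⟩ ⟨r₁, r₂⟩ ⟨W₁, W₂⟩ ⟨u₁, u₂⟩ ⟨h₁, h₂⟩ ⟨g₁, g₂⟩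
    obtain ⟨rfl, rfl⟩ := hM.2.1 _ _ _ _ _ _ h₁ g₁
    obtain ⟨rfl, rfl⟩ := hN.2.1 _ _ _ _ _ _ h₂ g₂
    exact ⟨rfl, rfl⟩
  · rintro ⟨s₁, s₂⟩ a (_ | Z) ⟨r₁, r₂⟩ ⟨u₁, u₂⟩ ⟨h₁, h₂⟩ ⟨g₁, g₂⟩ <;>
      exact Prod.ext (hM.2.2.1 _ _ _ _ _ h₁ g₁) (hN.2.2.1 _ _ _ _ _ h₂ g₂)
  · rintro ⟨s₁, s₂⟩ (_ | a) ⟨r₁, r₂⟩ ⟨u₁, u₂⟩ h g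
    · exact absurd h (unionProd_noEps hMe hNe _ _)
    · exact Prod.ext (hM.2.2.2.1 _ _ _ _ h.1 g.1) (hN.2.2.2.1 _ _ _ _ h.2 g.2)

end UnionProd

end VPA

/-- VPLs are closed under union: there is a non-blocking VPA with at
most `(n+1)(m+1)` states accepting `L(S) ∪ L(Q)`, which is deterministic and has no
ε-transitions whenever both components are deterministic. -/
theorem vpa_union {A : Type} {kind : A → VPKind} (M N : VPA A kind) :
    ∃ P : VPA A kind, P.NonBlocking ∧
      Fintype.card P.State ≤ (Fintype.card M.State + 1) * (Fintype.card N.State + 1) ∧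
      P.Lang = M.Lang ∪ N.Lang ∧
      (M.Deterministic → N.Deterministic → P.Deterministic ∧ P.NoEps) := by
  open VPA in
  refine ⟨unionProd M.epsElim.completion N.epsElim.completion, ?_, ?_, ?_, fun hM hN => ?_⟩
  · exact (completion_complete.unionProd completion_complete).nonBlocking
  · exact ((Fintype.card_prod _ _).trans
      (congrArg₂ (· * ·) Fintype.card_option Fintype.card_option)).le
  · rw [unionProd_lang completion_noEps completion_noEps completion_complete.nonBlocking
      completion_complete.nonBlocking completion_init_nonempty completion_init_nonempty,
      completion_lang epsElim_noEps, completion_lang epsElim_noEps, epsElim_lang, epsElim_lang]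
  · exact ⟨hM.epsElim.completion.unionProd hN.epsElim.completion completion_noEps completion_noEps,
      unionProd_noEps completion_noEps completion_noEps⟩
end

section
/- Let S be a deterministic VPA over an alphabet A with n states. Then there exists a non-blocking, deterministic VPA Q over A with no ε-transitions and n+1 states such that L(Q) is the complement A* − L(S). In particular, deterministic visibly pushdown languages are closed under complementation. -/
/-!
Since `M` is deterministic, a state with an ε-move has no letter move, so before reading its
next letter `M` follows a unique chain of ε-moves, which ends in a stable state or runs forever.
The complement automaton keeps the state of `M` as it is before these ε-moves, resolving the
chain (`ready`) only when the next letter is read, and falls into a fresh sink state `none`,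
pushing the dummy stack symbol `none`, as soon as `M` blocks. After reading `σ` it is therefore
in the sink iff `M` has no run on `σ`, and otherwise in a state `p` from which the runs of `M` on
`σ` continue by ε-moves only; so `σ ∉ L(M)` iff no final state is ε-reachable from `p`.
-/

theorem Relation.ReflTransGen.eq_of_right_unique {α : Type*} {r : α → α → Prop} {a b c : α}
    (U : Relator.RightUnique r) (hab : Relation.ReflTransGen r a b)
    (hac : Relation.ReflTransGen r a c) (hb : ∀ d, ¬ r b d) (hc : ∀ d, ¬ r c d) : b = c := by
  rcases Relation.ReflTransGen.total_of_right_unique U hab hac with h | h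
  · rcases h.cases_head with rfl | ⟨d, hbd, -⟩
    · rfl
    · exact absurd hbd (hb d)
  · rcases h.cases_head with rfl | ⟨d, hcd, -⟩
    · rfl
    · exact absurd hcd (hc d)

open Classical in
noncomputable def Set.pick? {α : Type*} (s : Set α) : Option α :=
  if h : s.Nonempty then some h.some else none

theorem Set.pick?_mem {α : Type*} {s : Set α} {x : α} (h : s.pick? = some x) : x ∈ s := by
  unfold Set.pick? at h
  split_ifs at h with hs
  · exact Option.some_injective _ h ▸ hs.some_mem

theorem Set.Subsingleton.pick?_eq_some {α : Type*} {s : Set α} {x : α} (hs : s.Subsingleton)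
    (hx : x ∈ s) : s.pick? = some x := by
  have hne : s.Nonempty := ⟨x, hx⟩
  rw [Set.pick?, dif_pos hne, hs hne.some_mem hx]

namespace VPA

variable {A : Type} {kind : A → VPKind} {M : VPA A kind}

variable (M) in
def EpsStep (p q : M.State) : Prop := (p, none, q) ∈ M.intT

variable (M) in
def Eps : M.State → M.State → Prop := Relation.ReflTransGen M.EpsStep

variable (M) in
def Stable (p : M.State) : Prop := ∀ q, ¬ M.EpsStep p q

theorem steps_of_eps {p q : M.State} (h : M.Eps p q) (σ : List A) (β : List M.Stack) :
    M.Steps (p, σ, β) (q, σ, β) := by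
  induction h with
  | refl => exact .refl
  | tail _ hstep ih => exact ih.tail (.eps hstep)

theorem Step.epsStep_or_cons {p p₁ : M.State} {σ σ₁ : List A} {β β₁ : List M.Stack}
    (h : M.Step (p, σ, β) (p₁, σ₁, β₁)) :
    (M.EpsStep p p₁ ∧ σ₁ = σ ∧ β₁ = β) ∨ ∃ a, σ = a :: σ₁ := by
  cases h with
  | eps h => exact .inl ⟨h, rfl, rfl⟩
  | _ => exact .inr ⟨_, rfl⟩

theorem NoEps.not_step_nil (hne : M.NoEps) {p : M.State} {β : List M.Stack} {d : M.Conf} :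
    ¬ M.Step (p, [], β) d := by
  rintro (_ | _ | _ | _ | ⟨h⟩)
  exact hne _ _ h

theorem Deterministic.epsStep_rightUnique (hdet : M.Deterministic) :
    Relator.RightUnique M.EpsStep :=
  fun p _ _ h₁ h₂ => hdet.2.2.2.1 p none _ _ h₁ h₂

theorem Deterministic.stable_of_step (hdet : M.Deterministic) {p p₁ : M.State} {a : A}
    {σ : List A} {β β₁ : List M.Stack} (h : M.Step (p, a :: σ, β) (p₁, σ, β₁)) :
    M.Stable p := by
  intro q hq
  refine hdet.2.2.2.2 p q ?_ hq
  cases h with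
  | push h => exact .inl ⟨_, _, _, h⟩
  | pop h => exact .inr (.inl ⟨_, _, _, h⟩)
  | popEmpty h => exact .inr (.inl ⟨_, _, _, h⟩)
  | int h => exact .inr (.inr ⟨_, _, h⟩)

theorem Deterministic.step_rightUnique (hdet : M.Deterministic) (hne : M.NoEps) :
    Relator.RightUnique M.Step := by
  intro c d d' h h'
  -- both moves read the same letter: its kind fixes the type of move, determinism the target
  cases h <;> cases h' <;> grind [NoEps, Deterministic, push_call, pop_ret, int_simple]

theorem NoEps.eq_of_steps_nil (hne : M.NoEps) {p : M.State} {β : List M.Stack} {c : M.Conf}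
    (h : M.Steps (p, [], β) c) : c = (p, [], β) := by
  rcases h.cases_head with rfl | ⟨d, hd, -⟩
  · rfl
  · exact absurd hd hne.not_step_nil

theorem Deterministic.eq_of_steps_nil (hdet : M.Deterministic) (hne : M.NoEps) {c : M.Conf}
    {p p' : M.State} {β β' : List M.Stack} (h : M.Steps c (p, [], β))
    (h' : M.Steps c (p', [], β')) : p = p' ∧ β = β' := by
  have := h.eq_of_right_unique (hdet.step_rightUnique hne) h' (fun _ => hne.not_step_nil)
    (fun _ => hne.not_step_nil)
  simpa using this

theorem nonBlocking_of_exists_step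
    (h : ∀ s a σ α, ∃ s' α', M.Step (s, a :: σ, α) (s', σ, α')) : M.NonBlocking := by
  intro s σ
  induction σ generalizing s with
  | nil => exact fun α => ⟨s, α, .refl⟩
  | cons a σ ih =>
    intro α
    obtain ⟨s', α', hstep⟩ := h s a σ α
    obtain ⟨p, β, hsteps⟩ := ih s' α'
    exact ⟨p, β, .head hstep hsteps⟩

variable (M) in
noncomputable def stabilize (p : M.State) : Option M.State := {q | M.Eps p q ∧ M.Stable q}.pick?

theorem Deterministic.stabilize_eq_some_iff (hdet : M.Deterministic) {p q : M.State} :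
    M.stabilize p = some q ↔ M.Eps p q ∧ M.Stable q := by
  refine ⟨Set.pick?_mem, Set.Subsingleton.pick?_eq_some (s := {q | M.Eps p q ∧ M.Stable q}) ?_⟩
  exact fun _ h₁ _ h₂ => h₁.1.eq_of_right_unique hdet.epsStep_rightUnique h₂.1 h₁.2 h₂.2

theorem Deterministic.stabilize_of_stable (hdet : M.Deterministic) {p : M.State}
    (hp : M.Stable p) : M.stabilize p = some p :=
  hdet.stabilize_eq_some_iff.2 ⟨.refl, hp⟩

theorem Deterministic.stabilize_eq_of_epsStep (hdet : M.Deterministic) {p p₁ : M.State}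
    (h : M.EpsStep p p₁) : M.stabilize p = M.stabilize p₁ := by
  ext q
  simp only [hdet.stabilize_eq_some_iff]
  refine ⟨fun ⟨hpq, hq⟩ => ⟨?_, hq⟩, fun ⟨hpq, hq⟩ => ⟨.head h hpq, hq⟩⟩
  rcases hpq.cases_head with rfl | ⟨r, hpr, hrq⟩
  · exact absurd h (hq p₁)
  · rwa [hdet.epsStep_rightUnique h hpr]

variable (M) in
noncomputable def pushFn (q : M.State) (a : A) : Option (M.Stack × M.State) :=
  {t : M.Stack × M.State | (q, a, t.1, t.2) ∈ M.pushT}.pick?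

variable (M) in
noncomputable def popFn (q : M.State) (a : A) (Z : Option M.Stack) : Option M.State :=
  {q' | (q, a, Z, q') ∈ M.popT}.pick?

variable (M) in
noncomputable def intFn (q : M.State) (a : A) : Option M.State :=
  {q' | (q, some a, q') ∈ M.intT}.pick?

theorem Deterministic.pushFn_eq_some (hdet : M.Deterministic) {q q' : M.State} {a : A}
    {Z : M.Stack} (h : (q, a, Z, q') ∈ M.pushT) : M.pushFn q a = some (Z, q') :=
  Set.Subsingleton.pick?_eq_some (fun _ h₁ _ h₂ => Prod.ext_iff.2 (hdet.2.1 _ _ _ _ _ _ h₁ h₂)) h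

theorem Deterministic.popFn_eq_some (hdet : M.Deterministic) {q q' : M.State} {a : A}
    {Z : Option M.Stack} (h : (q, a, Z, q') ∈ M.popT) : M.popFn q a Z = some q' :=
  Set.Subsingleton.pick?_eq_some (fun _ h₁ _ h₂ => hdet.2.2.1 _ _ _ _ _ h₁ h₂) h

theorem Deterministic.intFn_eq_some (hdet : M.Deterministic) {q q' : M.State} {a : A}
    (h : (q, some a, q') ∈ M.intT) : M.intFn q a = some q' :=
  Set.Subsingleton.pick?_eq_some (fun _ h₁ _ h₂ => hdet.2.2.2.1 _ _ _ _ h₁ h₂) h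

variable (M) in
noncomputable def ready (s : Option M.State) : Option M.State := s.bind M.stabilize

variable (M) in
noncomputable def complPush (r : Option M.State) (a : A) : Option (M.Stack × M.State) :=
  r.bind (M.pushFn · a)

variable (M) in
noncomputable def complPop (r : Option M.State) (a : A) :
    Option (Option M.Stack) → Option M.State
  | none => r.bind (M.popFn · a none)
  | some none => none
  | some (some Z) => r.bind (M.popFn · a (some Z))

variable (M) in
noncomputable def complInt (r : Option M.State) (a : A) : Option M.State :=
  r.bind (M.intFn · a)

theorem complPop_none (a : A) (Z : Option (Option M.Stack)) : M.complPop none a Z = none := by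
  rcases Z with _ | _ | _ <;> rfl

variable (M) in
noncomputable abbrev compl : VPA A kind where
  State := Option M.State
  Stack := Option M.Stack
  fintypeState := inferInstance
  init := {M.init.pick?}
  final := {s | ∀ p ∈ s, ∀ f ∈ M.final, ¬ M.Eps p f}
  pushT := {t | kind t.2.1 = .call ∧
    (M.complPush (M.ready t.1) t.2.1).map Prod.fst = t.2.2.1 ∧
    (M.complPush (M.ready t.1) t.2.1).map Prod.snd = t.2.2.2}
  popT := {t | kind t.2.1 = .ret ∧ M.complPop (M.ready t.1) t.2.1 t.2.2.1 = t.2.2.2}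
  intT := {t | ∃ a, t.2.1 = some a ∧ kind a = .intern ∧ M.complInt (M.ready t.1) a = t.2.2}
  push_call _ _ _ _ h := h.1
  pop_ret _ _ _ _ h := h.1
  int_simple := by
    rintro p a q ⟨b, hb, hk, -⟩
    cases hb
    exact hk

theorem mem_compl_pushT {s s' : Option M.State} {a : A} {Z : Option M.Stack} :
    (s, a, Z, s') ∈ (compl M).pushT ↔ kind a = .call ∧
      (M.complPush (M.ready s) a).map Prod.fst = Z ∧
      (M.complPush (M.ready s) a).map Prod.snd = s' :=
  Iff.rfl

theorem mem_compl_popT {s s' : Option M.State} {a : A} {Z : Option (Option M.Stack)} :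
    (s, a, Z, s') ∈ (compl M).popT ↔ kind a = .ret ∧ M.complPop (M.ready s) a Z = s' :=
  Iff.rfl

theorem mem_compl_intT {s s' : Option M.State} {a : A} :
    (s, some a, s') ∈ (compl M).intT ↔ kind a = .intern ∧ M.complInt (M.ready s) a = s' :=
  ⟨fun ⟨_, hb, h⟩ => Option.some_injective _ hb ▸ h, fun h => ⟨a, rfl, h⟩⟩

theorem not_mem_compl_intT_none {s s' : Option M.State} : (s, none, s') ∉ (compl M).intT :=
  fun ⟨_, hb, _⟩ => Option.some_ne_none _ hb.symm

theorem compl_deterministic : (compl M).Deterministic := by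
  refine ⟨Set.subsingleton_singleton, ?_, ?_, ?_, fun _ _ _ => not_mem_compl_intT_none⟩
  · intro p a Z₁ q₁ Z₂ q₂ h₁ h₂
    obtain ⟨-, hZ₁, hq₁⟩ := mem_compl_pushT.1 h₁
    obtain ⟨-, hZ₂, hq₂⟩ := mem_compl_pushT.1 h₂
    exact ⟨hZ₁.symm.trans hZ₂, hq₁.symm.trans hq₂⟩
  · intro p a Z q₁ q₂ h₁ h₂
    exact (mem_compl_popT.1 h₁).2.symm.trans (mem_compl_popT.1 h₂).2
  · rintro p (_ | a) q₁ q₂ h₁ h₂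
    · exact absurd h₁ not_mem_compl_intT_none
    · exact (mem_compl_intT.1 h₁).2.symm.trans (mem_compl_intT.1 h₂).2

theorem compl_noEps : (compl M).NoEps := fun _ _ => not_mem_compl_intT_none

theorem compl_nonBlocking : (compl M).NonBlocking := by
  refine nonBlocking_of_exists_step fun s a σ α => ?_
  cases hk : kind a with
  | call => exact ⟨_, _, .push (mem_compl_pushT.2 ⟨hk, rfl, rfl⟩)⟩
  | ret =>
    cases α with
    | nil => exact ⟨_, _, .popEmpty (mem_compl_popT.2 ⟨hk, rfl⟩)⟩
    | cons Z α => exact ⟨_, _, .pop (mem_compl_popT.2 ⟨hk, rfl⟩)⟩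
  | intern => exact ⟨_, _, .int (mem_compl_intT.2 ⟨hk, rfl⟩)⟩

theorem compl_step_sink {c d : (compl M).Conf} (h : (compl M).Step c d) (hc : c.1 = none) :
    d.1 = none := by
  obtain ⟨s, σ, α⟩ := c
  cases hc
  cases h with
  | push h => exact (mem_compl_pushT.1 h).2.2.symm
  | pop h => exact (mem_compl_popT.1 h).2.symm.trans (complPop_none _ _)
  | popEmpty h => exact (mem_compl_popT.1 h).2.symm
  | int h => exact (mem_compl_intT.1 h).2.symm
  | eps h => exact absurd h not_mem_compl_intT_none

theorem compl_steps_sink {c d : (compl M).Conf} (h : (compl M).Steps c d) (hc : c.1 = none) :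
    d.1 = none := by
  induction h with
  | refl => exact hc
  | tail _ hstep ih => exact compl_step_sink hstep ih

theorem compl_step_congr {s s' : Option M.State} {σ : List A} {α : List (Option M.Stack)}
    {d : (compl M).Conf} (hs : M.ready s = M.ready s') (h : (compl M).Step (s, σ, α) d) :
    (compl M).Step (s', σ, α) d := by
  cases h with
  | push h => exact .push (mem_compl_pushT.2 (hs ▸ mem_compl_pushT.1 h))
  | pop h => exact .pop (mem_compl_popT.2 (hs ▸ mem_compl_popT.1 h))
  | popEmpty h => exact .popEmpty (mem_compl_popT.2 (hs ▸ mem_compl_popT.1 h))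
  | int h => exact .int (mem_compl_intT.2 (hs ▸ mem_compl_intT.1 h))
  | eps h => exact absurd h not_mem_compl_intT_none

theorem exists_step_of_compl_step {s : Option M.State} {σ σ₁ : List A} {β : List M.Stack}
    {p₁ : M.State} {γ : List (Option M.Stack)}
    (h : (compl M).Step (s, σ, β.map some) (some p₁, σ₁, γ)) :
    ∃ q β₁, M.ready s = some q ∧ γ = β₁.map some ∧ M.Step (q, σ, β) (p₁, σ₁, β₁) := by
  generalize hα : (β.map some : List (compl M).Stack) = α at h
  cases h with
  | push h =>
    obtain ⟨-, hZ, hp₁⟩ := mem_compl_pushT.1 h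
    obtain ⟨⟨Z, _⟩, hpush, rfl⟩ := Option.map_eq_some_iff.1 hp₁
    obtain ⟨q, hq, hZq⟩ := Option.bind_eq_some_iff.1 hpush
    rw [hpush] at hZ
    subst hZ hα
    exact ⟨q, Z :: β, hq, rfl, .push (Set.pick?_mem hZq :)⟩
  | pop h =>
    obtain ⟨Z, β, rfl, rfl, rfl⟩ := List.map_eq_cons_iff.1 hα
    obtain ⟨q, hq, hp₁⟩ := Option.bind_eq_some_iff.1 (mem_compl_popT.1 h).2
    exact ⟨q, β, hq, rfl, .pop (Set.pick?_mem hp₁ :)⟩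
  | popEmpty h =>
    obtain rfl := List.map_eq_nil_iff.1 hα
    obtain ⟨q, hq, hp₁⟩ := Option.bind_eq_some_iff.1 (mem_compl_popT.1 h).2
    exact ⟨q, [], hq, rfl, .popEmpty (Set.pick?_mem hp₁ :)⟩
  | int h =>
    obtain ⟨q, hq, hp₁⟩ := Option.bind_eq_some_iff.1 (mem_compl_intT.1 h).2
    exact ⟨q, β, hq, hα.symm, .int (Set.pick?_mem hp₁ :)⟩
  | eps h => exact absurd h not_mem_compl_intT_none

theorem Deterministic.compl_step_of_step (hdet : M.Deterministic) {p p₁ : M.State} {a : A}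
    {σ : List A} {β β₁ : List M.Stack} (h : M.Step (p, a :: σ, β) (p₁, σ, β₁)) :
    (compl M).Step (some p, a :: σ, β.map some) (some p₁, σ, β₁.map some) := by
  have hr : M.ready (some p) = some p := hdet.stabilize_of_stable (hdet.stable_of_step h)
  cases h with
  | push h =>
    refine .push (mem_compl_pushT.2 ⟨M.push_call _ _ _ _ h, ?_⟩)
    simp [hr, complPush, hdet.pushFn_eq_some h]
  | pop h =>
    refine .pop (mem_compl_popT.2 ⟨M.pop_ret _ _ _ _ h, ?_⟩)
    simp [hr, complPop, hdet.popFn_eq_some h]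
  | popEmpty h =>
    refine .popEmpty (mem_compl_popT.2 ⟨M.pop_ret _ _ _ _ h, ?_⟩)
    simp [hr, complPop, hdet.popFn_eq_some h]
  | int h =>
    refine .int (mem_compl_intT.2 ⟨M.int_simple _ _ _ h, ?_⟩)
    simp [hr, complInt, hdet.intFn_eq_some h]

theorem exists_steps_of_compl_steps {s : Option M.State} {σ : List A} {β : List M.Stack}
    {p' : M.State} {γ' : List (Option M.Stack)}
    (h : (compl M).Steps (s, σ, β.map some) (some p', [], γ')) :
    ∃ p γ, s = some p ∧ γ' = γ.map some ∧ M.Steps (p, σ, β) (p', [], γ) := by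
  generalize hc : ((s, σ, β.map some) : (compl M).Conf) = c at h
  induction h using Relation.ReflTransGen.head_induction_on generalizing s σ β with
  | refl =>
    simp only [Prod.mk.injEq] at hc
    obtain ⟨rfl, rfl, rfl⟩ := hc
    exact ⟨p', β, rfl, rfl, .refl⟩
  | @head c d hstep hsteps ih =>
    subst hc
    obtain ⟨_ | p₁, σ₁, α₁⟩ := d
    · exact absurd (compl_steps_sink hsteps rfl) (Option.some_ne_none _)
    obtain ⟨q, β₁, hq, rfl, hstepM⟩ := exists_step_of_compl_step hstep
    obtain ⟨_, γ, ⟨⟩, rfl, hM⟩ := ih rfl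
    obtain ⟨p, rfl, hpq⟩ := Option.bind_eq_some_iff.1 hq
    exact ⟨p, γ, rfl, rfl, (steps_of_eps (Set.pick?_mem hpq).1 _ _).trans (.head hstepM hM)⟩

theorem Deterministic.exists_compl_steps_of_steps (hdet : M.Deterministic) {p q : M.State}
    {σ : List A} {β γ : List M.Stack} (h : M.Steps (p, σ, β) (q, [], γ)) :
    ∃ p', M.Eps p' q ∧
      (compl M).Steps (some p, σ, β.map some) (some p', [], γ.map some) := by
  generalize hc : (p, σ, β) = c at h
  induction h using Relation.ReflTransGen.head_induction_on generalizing p σ β with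
  | refl =>
    simp only [Prod.mk.injEq] at hc
    obtain ⟨rfl, rfl, rfl⟩ := hc
    exact ⟨_, .refl, .refl⟩
  | @head c d hstep hsteps ih =>
    subst hc
    obtain ⟨p₁, σ₁, β₁⟩ := d
    obtain ⟨p', hp'q, hQ⟩ := ih rfl
    rcases hstep.epsStep_or_cons with ⟨hε, rfl, rfl⟩ | ⟨a, rfl⟩
    · cases σ₁ with
      | nil =>
        have hend := compl_noEps.eq_of_steps_nil hQ
        simp only [Prod.mk.injEq, Option.some.injEq, true_and] at hend
        obtain ⟨rfl, hγ⟩ := hend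
        exact ⟨p, .head hε hp'q, hγ ▸ .refl⟩
      | cons a σ =>
        obtain ⟨d, hd, hdQ⟩ := hQ.cases_head.resolve_left (by simp)
        have hready : M.ready (some p₁) = M.ready (some p) := (hdet.stabilize_eq_of_epsStep hε).symm
        exact ⟨p', hp'q, .head (compl_step_congr hready hd) hdQ⟩
    · exact ⟨p', hp'q, .head (hdet.compl_step_of_step hstep) hQ⟩

theorem Deterministic.compl_lang (hdet : M.Deterministic) : (compl M).Lang = M.Langᶜ := by
  ext σ
  constructor
  · rintro ⟨_, rfl, s, hs, γ', hQ⟩ ⟨p₀, hp₀, f, hf, β, hM⟩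
    obtain ⟨p', hp'f, hQ'⟩ := hdet.exists_compl_steps_of_steps hM
    rw [hdet.1.pick?_eq_some hp₀] at hQ
    obtain ⟨rfl, -⟩ := compl_deterministic.eq_of_steps_nil compl_noEps hQ hQ'
    exact hs p' rfl f hf hp'f
  · intro hσ
    obtain ⟨s, γ', hQ⟩ := compl_nonBlocking M.init.pick? σ []
    refine ⟨_, rfl, s, ?_, γ', hQ⟩
    rintro p' rfl f hf hp'f
    obtain ⟨p₀, γ, hp₀, -, hM⟩ := exists_steps_of_compl_steps (β := []) hQ
    exact hσ ⟨p₀, Set.pick?_mem hp₀, f, hf, γ, hM.trans (steps_of_eps hp'f _ _)⟩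

end VPA

/-- Deterministic VPLs are closed under complementation: for a
deterministic VPA with `n` states there is a non-blocking, deterministic VPA with no
ε-transitions and `n+1` states accepting the complement language. -/
theorem vpa_complement {A : Type} {kind : A → VPKind} (M : VPA A kind)
    (hdet : M.Deterministic) :
    ∃ Q : VPA A kind, Q.NonBlocking ∧ Q.Deterministic ∧ Q.NoEps ∧
      Fintype.card Q.State = Fintype.card M.State + 1 ∧
      Q.Lang = M.Langᶜ :=
  ⟨M.compl, VPA.compl_nonBlocking, VPA.compl_deterministic, VPA.compl_noEps,
    Fintype.card_option, hdet.compl_lang⟩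
end

section
/- Let S be a specification IOVPTS and I an implementation IOVPTS over the same alphabet L = L_I ∪ L_U. Then D = otr(S)·L_U is a visibly pushdown language, and I ioco-like-conforms to S if and only if I (D,∅)-visibly conforms to S. -/
/-! The output set `out((s₀,⊥) after σ)` consists exactly of the outputs `ℓ` with `σℓ` a trace
from `s₀`, so ioco-like conformance says precisely that every trace of `I` lying in
`otr(S)·L_U` is a trace of `S`. The language `otr(S)·L_U` is accepted by a visibly pushdown
automaton that simulates `S` on the states and stack symbols wrapped in `some`, and on an output
symbol may instead move to the accepting state `none`, from which there are no moves. -/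

namespace VPTS

variable {L : Type} {kind : L → VPKind}

section Obs

variable {M : VPTS L kind}

theorem Obs.append {c d e : M.Conf} {σ τ : List L} (h₁ : M.Obs c σ d) (h₂ : M.Obs d τ e) :
    M.Obs c (σ ++ τ) e := by
  induction h₁ with
  | refl => exact h₂
  | push ht _ ih => exact .push ht (ih h₂)
  | pop ht _ ih => exact .pop ht (ih h₂)
  | popEmpty ht _ ih => exact .popEmpty ht (ih h₂)
  | int ht _ ih => exact .int ht (ih h₂)
  | silent ht _ ih => exact .silent ht (ih h₂)

theorem Obs.exists_of_append {c e : M.Conf} {σ τ : List L} (h : M.Obs c (σ ++ τ) e) :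
    ∃ d, M.Obs c σ d ∧ M.Obs d τ e := by
  generalize hρ : σ ++ τ = ρ at h
  induction h generalizing σ with
  | refl c =>
    obtain ⟨rfl, rfl⟩ := List.append_eq_nil_iff.mp hρ
    exact ⟨c, .refl c, .refl c⟩
  | push ht hobs ih =>
    rcases σ with _ | ⟨b, σ⟩
    · obtain rfl : τ = _ := hρ
      exact ⟨_, .refl _, .push ht hobs⟩
    · obtain ⟨rfl, hρ'⟩ := List.cons.inj hρ
      obtain ⟨d, h₁, h₂⟩ := ih hρ'
      exact ⟨d, .push ht h₁, h₂⟩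
  | pop ht hobs ih =>
    rcases σ with _ | ⟨b, σ⟩
    · obtain rfl : τ = _ := hρ
      exact ⟨_, .refl _, .pop ht hobs⟩
    · obtain ⟨rfl, hρ'⟩ := List.cons.inj hρ
      obtain ⟨d, h₁, h₂⟩ := ih hρ'
      exact ⟨d, .pop ht h₁, h₂⟩
  | popEmpty ht hobs ih =>
    rcases σ with _ | ⟨b, σ⟩
    · obtain rfl : τ = _ := hρ
      exact ⟨_, .refl _, .popEmpty ht hobs⟩
    · obtain ⟨rfl, hρ'⟩ := List.cons.inj hρ
      obtain ⟨d, h₁, h₂⟩ := ih hρ'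
      exact ⟨d, .popEmpty ht h₁, h₂⟩
  | int ht hobs ih =>
    rcases σ with _ | ⟨b, σ⟩
    · obtain rfl : τ = _ := hρ
      exact ⟨_, .refl _, .int ht hobs⟩
    · obtain ⟨rfl, hρ'⟩ := List.cons.inj hρ
      obtain ⟨d, h₁, h₂⟩ := ih hρ'
      exact ⟨d, .int ht h₁, h₂⟩
  | silent ht _ ih =>
    obtain ⟨d, h₁, h₂⟩ := ih hρ
    exact ⟨d, .silent ht h₁, h₂⟩

theorem obs_append_iff {c e : M.Conf} {σ τ : List L} :
    M.Obs c (σ ++ τ) e ↔ ∃ d, M.Obs c σ d ∧ M.Obs d τ e :=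
  ⟨Obs.exists_of_append, fun ⟨_, h₁, h₂⟩ => h₁.append h₂⟩

theorem mem_outSet_after_iff {LU : Set L} {c : M.Conf} {σ : List L} {ℓ : L} :
    ℓ ∈ M.outSet LU (M.after c σ) ↔ ℓ ∈ LU ∧ ∃ e, M.Obs c (σ ++ [ℓ]) e := by
  simp only [outSet, after, Set.mem_ofPred_eq, obs_append_iff]
  constructor
  · rintro ⟨hℓ, d, hd, e, he⟩
    exact ⟨hℓ, e, d, hd, he⟩
  · rintro ⟨hℓ, e, d, hd, he⟩
    exact ⟨hℓ, d, hd, e, he⟩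

end Obs

section OtrConcatVPA

variable (S : VPTS L kind) (LU : Set L)

inductive OtrConcatPushT : Option S.State × L × Option S.Stack × Option S.State → Prop
  | lift {p a Z q} : (p, a, Z, q) ∈ S.pushT → OtrConcatPushT (some p, a, some Z, some q)
  | out {p ℓ} : ℓ ∈ LU → kind ℓ = .call → OtrConcatPushT (some p, ℓ, none, none)

inductive OtrConcatPopT : Option S.State × L × Option (Option S.Stack) × Option S.State → Prop
  | lift {p a Z q} : (p, a, some Z, q) ∈ S.popT →
      OtrConcatPopT (some p, a, some (some Z), some q)
  | liftEmpty {p a q} : (p, a, none, q) ∈ S.popT → OtrConcatPopT (some p, a, none, some q)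
  | out {p ℓ Z} : ℓ ∈ LU → kind ℓ = .ret → OtrConcatPopT (some p, ℓ, Z, none)

inductive OtrConcatIntT : Option S.State × Option L × Option S.State → Prop
  | lift {p a q} : (p, a, q) ∈ S.intT → OtrConcatIntT (some p, a, some q)
  | out {p ℓ} : ℓ ∈ LU → kind ℓ = .intern → OtrConcatIntT (some p, some ℓ, none)

def otrConcatVPA : VPA L kind where
  State := Option S.State
  Stack := Option S.Stack
  fintypeState := inferInstance
  init := some '' S.init
  final := {none}
  pushT := {t | OtrConcatPushT S LU t}
  popT := {t | OtrConcatPopT S LU t}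
  intT := {t | OtrConcatIntT S LU t}
  push_call := by
    rintro _ _ _ _ (⟨ht⟩ | ⟨-, hk⟩)
    exacts [S.push_call _ _ _ _ ht, hk]
  pop_ret := by
    rintro _ _ _ _ (⟨ht⟩ | ⟨ht⟩ | ⟨-, hk⟩)
    exacts [S.pop_ret _ _ _ _ ht, S.pop_ret _ _ _ _ ht, hk]
  int_simple := by
    rintro _ _ _ (⟨ht⟩ | ⟨-, hk⟩)
    exacts [S.int_simple _ _ _ ht, hk]

variable {S LU}

theorem otrConcatVPA_steps_of_obs {c c' : S.Conf} {σ : List L} (h : S.Obs c σ c')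
    (ρ : List L) :
    (otrConcatVPA S LU).Steps (some c.1, σ ++ ρ, c.2.map some) (some c'.1, ρ, c'.2.map some) := by
  induction h with
  | refl => exact .refl
  | push ht _ ih => exact .head (.push (.lift ht)) ih
  | pop ht _ ih => exact .head (.pop (.lift ht)) ih
  | popEmpty ht _ ih => exact .head (.popEmpty (.liftEmpty ht)) ih
  | int ht _ ih => exact .head (.int (.lift ht)) ih
  | silent ht _ ih => exact .head (.eps (.lift ht)) ih

theorem otrConcatVPA_step_out {ℓ : L} (hℓ : ℓ ∈ LU) (q : S.State) (β : List S.Stack) :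
    ∃ γ, (otrConcatVPA S LU).Step (some q, [ℓ], β.map some) (none, [], γ) := by
  cases hk : kind ℓ with
  | call => exact ⟨_, .push (OtrConcatPushT.out hℓ hk)⟩
  | ret =>
    rcases β with _ | ⟨Z, β⟩
    · exact ⟨_, .popEmpty (OtrConcatPopT.out hℓ hk)⟩
    · exact ⟨_, .pop (OtrConcatPopT.out hℓ hk)⟩
  | intern => exact ⟨_, .int (OtrConcatIntT.out hℓ hk)⟩

theorem otrConcatVPA_not_step_none {w : List L} {γ : List (Option S.Stack)}
    {c : (otrConcatVPA S LU).Conf} : ¬ (otrConcatVPA S LU).Step (none, w, γ) c := by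
  rintro (⟨⟨⟩⟩ | ⟨⟨⟩⟩ | ⟨⟨⟩⟩ | ⟨⟨⟩⟩ | ⟨⟨⟩⟩)

theorem otrConcatVPA_step_some {p : S.State} {w : List L} {α : List S.Stack}
    {c : (otrConcatVPA S LU).Conf} (h : (otrConcatVPA S LU).Step (some p, w, α.map some) c) :
    (∃ v u q β, w = v ++ u ∧ c = (some q, u, β.map some) ∧ S.Obs (p, α) v (q, β)) ∨
      ∃ ℓ ∈ LU, ∃ u γ, w = ℓ :: u ∧ c = (none, u, γ) := by
  generalize hc : ((some p, w, α.map some) : (otrConcatVPA S LU).Conf) = c₀ at h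
  cases h with
  | push ht =>
    cases ht with
    | lift ht => cases hc; exact .inl ⟨[_], _, _, _ :: α, rfl, rfl, .push ht (.refl _)⟩
    | out hℓ => cases hc; exact .inr ⟨_, hℓ, _, _, rfl, rfl⟩
  | pop ht =>
    cases α with
    | nil => cases hc
    | cons Z α =>
      cases ht with
      | lift ht => cases hc; exact .inl ⟨[_], _, _, α, rfl, rfl, .pop ht (.refl _)⟩
      | out hℓ => cases hc; exact .inr ⟨_, hℓ, _, _, rfl, rfl⟩
  | popEmpty ht =>
    cases α with
    | cons => cases hc
    | nil =>
      cases ht with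
      | liftEmpty ht => cases hc; exact .inl ⟨[_], _, _, [], rfl, rfl, .popEmpty ht (.refl _)⟩
      | out hℓ => cases hc; exact .inr ⟨_, hℓ, _, _, rfl, rfl⟩
  | int ht =>
    cases ht with
    | lift ht => cases hc; exact .inl ⟨[_], _, _, α, rfl, rfl, .int ht (.refl _)⟩
    | out hℓ => cases hc; exact .inr ⟨_, hℓ, _, _, rfl, rfl⟩
  | eps ht =>
    cases ht with
    | lift ht => cases hc; exact .inl ⟨[], _, _, α, rfl, rfl, .silent ht (.refl _)⟩

theorem otrConcatVPA_exists_obs_of_steps {p : S.State} {w : List L} {α : List S.Stack}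
    {γ : List (Option S.Stack)}
    (h : (otrConcatVPA S LU).Steps (some p, w, α.map some) (none, [], γ)) :
    ∃ v ℓ, w = v ++ [ℓ] ∧ ℓ ∈ LU ∧ ∃ d, S.Obs (p, α) v d := by
  generalize hc : ((some p, w, α.map some) : (otrConcatVPA S LU).Conf) = c at h
  induction h using Relation.ReflTransGen.head_induction_on generalizing p w α with
  | refl => cases hc
  | head hstep hsteps ih =>
    subst hc
    rcases otrConcatVPA_step_some hstep with ⟨v, u, q, β, rfl, rfl, hv⟩ | ⟨ℓ, hℓ, u, γ', rfl, rfl⟩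
    · obtain ⟨v', ℓ, rfl, hℓ, d, hv'⟩ := ih rfl
      exact ⟨v ++ v', ℓ, (List.append_assoc ..).symm, hℓ, d, hv.append hv'⟩
    · obtain rfl : u = [] := by
        rcases hsteps.cases_head with hc | ⟨_, hstep', _⟩
        · cases hc; rfl
        · exact absurd hstep' otrConcatVPA_not_step_none
      exact ⟨[], ℓ, rfl, hℓ, _, .refl _⟩

theorem lang_otrConcatVPA : (otrConcatVPA S LU).Lang = S.otrConcat LU := by
  ext w
  constructor
  · rintro ⟨_, ⟨s₀, hs₀, rfl⟩, _, rfl, γ, h⟩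
    obtain ⟨v, ℓ, rfl, hℓ, d, hv⟩ := otrConcatVPA_exists_obs_of_steps (α := []) h
    exact ⟨v, ⟨s₀, hs₀, d, hv⟩, ℓ, hℓ, rfl⟩
  · rintro ⟨v, ⟨s₀, hs₀, ⟨q, β⟩, hv⟩, ℓ, hℓ, rfl⟩
    obtain ⟨γ, hout⟩ := otrConcatVPA_step_out hℓ q β
    exact ⟨some s₀, ⟨s₀, hs₀, rfl⟩, none, rfl, γ,
      (otrConcatVPA_steps_of_obs hv [ℓ]).tail hout⟩

end OtrConcatVPA

theorem ioco_iff_forall_otrConcat {LU : Set L} {I S : VPTS L kind} :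
    Ioco LU I S ↔ ∀ w ∈ I.otr ∩ S.otrConcat LU, w ∈ S.otr := by
  constructor
  · rintro hioco _ ⟨⟨q₀, hq₀, e, he⟩, σ, hσ, ℓ, hℓ, rfl⟩
    obtain ⟨s₀, hs₀, hout⟩ := hioco σ hσ q₀ hq₀ ℓ (mem_outSet_after_iff.mpr ⟨hℓ, e, he⟩)
    obtain ⟨-, e', he'⟩ := mem_outSet_after_iff.mp hout
    exact ⟨s₀, hs₀, e', he'⟩
  · intro h σ hσ q₀ hq₀ ℓ hout
    obtain ⟨hℓ, e, he⟩ := mem_outSet_after_iff.mp hout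
    obtain ⟨s₀, hs₀, e', he'⟩ := h _ ⟨⟨q₀, hq₀, e, he⟩, σ, hσ, ℓ, hℓ, rfl⟩
    exact ⟨s₀, hs₀, mem_outSet_after_iff.mpr ⟨hℓ, e', he'⟩⟩

theorem vConf_empty_iff {I S : VPTS L kind} {D : Set (List L)} :
    VConf I S D ∅ ↔ ∀ w ∈ I.otr ∩ D, w ∈ S.otr := by
  simp [VConf]

end VPTS

/-- `D = otr(S)·L_U` is a visibly pushdown language, and `I`
ioco-like conforms to `S` iff `I` (D,∅)-visibly conforms to `S`. -/
theorem ioco_iff_vconf {L : Type} {kind : L → VPKind} (LU : Set L)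
    (S I : VPTS L kind) :
    (∃ M : VPA L kind, M.Lang = S.otrConcat LU) ∧
    (VPTS.Ioco LU I S ↔ VPTS.VConf I S (S.otrConcat LU) ∅) :=
  ⟨⟨_, VPTS.lang_otrConcatVPA⟩, VPTS.ioco_iff_forall_otrConcat.trans VPTS.vConf_empty_iff.symm⟩
end
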